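/- Let G be a finite non-solvable group. Then every x ∈ G with x ∉ Sol(G) satisfies deg(x) > 5, where deg(x) is the number of elements y ∈ G such that ⟨x,y⟩ is not solvable; that is, the minimum degree of the induced non-solvable graph on G ∖ Sol(G) is greater than 5. -/

import Mathlib

/-!
Pick `z` with `⟨x, z⟩` not solvable. For `u, v ∈ ⟨x⟩` we have `⟨x, u z v⟩ = ⟨x, z⟩`, and also
`⟨x, z⁻¹⟩ = ⟨x, z⟩`, so the double cosets `⟨x⟩z⟨x⟩` and `⟨x⟩z⁻¹⟨x⟩` consist of neighbours of `x`.
If `z x z⁻¹ ∈ ⟨x⟩` then `z` normalizes `⟨x⟩` (`G` is finite) and `⟨x, z⟩` would be cyclic-by-cyclic,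
so this fails; hence the cosets `⟨x⟩z` and `⟨x⟩zx` are disjoint and `⟨x⟩z⟨x⟩` has at least
`2 · ord x` elements, which is `≥ 6` unless `x` is an involution. In that case
`z⁻¹ ∉ ⟨x⟩z⟨x⟩` (otherwise `⟨x, z⟩` is cyclic or dihedral), so the two double cosets are disjoint
and contribute `4 + 2` elements.
-/

open Subgroup DoubleCoset
open scoped Pointwise

section

variable {G : Type*} [Group G]

theorem isSolvable_of_zpowers_eq_top {Q : Type*} [Group Q] {q : Q} (hq : zpowers q = ⊤) :
    Group.IsSolvable Q :=
  have : IsCyclic Q := isCyclic_iff_exists_zpowers_eq_top.2 ⟨q, hq⟩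
  Group.isSolvable_of_comm fun a b => IsCyclic.commGroup.mul_comm a b

theorem isSolvable_subgroupOf_zpowers (w : G) (H : Subgroup G) :
    Group.IsSolvable ((zpowers w).subgroupOf H) := by
  refine Group.isSolvable_of_comm fun a b => Subtype.ext <| Subtype.ext ?_
  obtain ⟨m, hm⟩ := mem_subgroupOf.1 a.2
  obtain ⟨k, hk⟩ := mem_subgroupOf.1 b.2
  simp only [coe_mul, ← hm, ← hk]
  exact zpow_mul_comm w m k

/-- `⟨w⟩` is normal in `⟨w, c⟩` with cyclic quotient generated by the image of `c`. -/
theorem isSolvable_closure_pair_of_mem_normalizer {w c : G}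
    (hc : c ∈ normalizer (zpowers w : Set G)) : Group.IsSolvable (closure ({w, c} : Set G)) := by
  set H := closure ({w, c} : Set G)
  have hH : H ≤ normalizer (zpowers w : Set G) := by
    rw [closure_le, Set.insert_subset_iff, Set.singleton_subset_iff]
    exact ⟨le_normalizer (mem_zpowers w), hc⟩
  set K := (zpowers w).subgroupOf H
  have : K.Normal := normal_subgroupOf_of_le_normalizer hH
  rw [Group.isSolvable_iff_subgroup_quotient K]
  refine ⟨isSolvable_subgroupOf_zpowers w H,
    isSolvable_of_zpowers_eq_top (q := QuotientGroup.mk' K ⟨c, subset_closure (by simp)⟩) ?_⟩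
  rw [eq_top_iff, ← MonoidHom.range_eq_top_of_surjective _ (QuotientGroup.mk'_surjective K),
    MonoidHom.range_eq_map, ← closure_closure_coe_preimage, MonoidHom.map_closure, closure_le]
  rintro _ ⟨⟨g, hg⟩, hgs, rfl⟩
  rcases hgs with (hgw : g = w) | (hgc : g = c) <;> subst g
  · have hw : QuotientGroup.mk' K ⟨w, hg⟩ = 1 :=
      (QuotientGroup.eq_one_iff _).2 (mem_subgroupOf.2 (mem_zpowers w))
    rw [SetLike.mem_coe, hw]
    exact one_mem _
  · exact mem_zpowers _

theorem isSolvable_closure_pair_of_conj_mem_zpowers [Finite G] {w c : G}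
    (h : c * w * c⁻¹ ∈ zpowers w) : Group.IsSolvable (closure ({w, c} : Set G)) := by
  refine isSolvable_closure_pair_of_mem_normalizer (mem_normalizer_fintype ?_)
  rintro _ ⟨k, rfl⟩
  rw [← conj_zpow]
  exact zpow_mem h k

variable {x y z : G}

theorem closure_pair_le_of_mem (hy : y ∈ closure ({x, z} : Set G)) :
    closure ({x, y} : Set G) ≤ closure ({x, z} : Set G) := by
  rw [closure_le, Set.insert_subset_iff, Set.singleton_subset_iff]
  exact ⟨subset_closure (by simp), hy⟩

theorem closure_pair_inv : closure ({x, z⁻¹} : Set G) = closure ({x, z} : Set G) :=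
  le_antisymm (closure_pair_le_of_mem (inv_mem (subset_closure (by simp))))
    (closure_pair_le_of_mem <| by
      simpa using inv_mem (subset_closure (Set.mem_insert_of_mem x (Set.mem_singleton z⁻¹))))

theorem closure_pair_le_of_mem_doubleCoset (hy : y ∈ doubleCoset z (zpowers x) (zpowers x)) :
    closure ({x, y} : Set G) ≤ closure ({x, z} : Set G) := by
  obtain ⟨u, hu, v, hv, rfl⟩ := mem_doubleCoset.1 hy
  have hx : zpowers x ≤ closure ({x, z} : Set G) := zpowers_le.2 (subset_closure (by simp))
  exact closure_pair_le_of_mem (mul_mem (mul_mem (hx hu) (subset_closure (by simp))) (hx hv))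

theorem closure_pair_eq_of_mem_doubleCoset (hy : y ∈ doubleCoset z (zpowers x) (zpowers x)) :
    closure ({x, y} : Set G) = closure ({x, z} : Set G) := by
  refine le_antisymm (closure_pair_le_of_mem_doubleCoset hy) (closure_pair_le_of_mem_doubleCoset ?_)
  rw [doubleCoset_eq_of_mem hy]
  exact mem_doubleCoset_self _ _ z

theorem ncard_zpowers_mul_singleton (x a : G) : ((zpowers x : Set G) * {a}).ncard = orderOf x := by
  rw [Set.mul_singleton, Set.ncard_image_of_injective _ (mul_left_injective a),
    ← Nat.card_coe_set_eq, SetLike.coe_sort_coe, Nat.card_zpowers]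

theorem zpowers_mul_singleton_subset_doubleCoset {v : G} (hv : v ∈ zpowers x) :
    (zpowers x : Set G) * {z * v} ⊆ doubleCoset z (zpowers x) (zpowers x) := by
  rintro _ ⟨u, hu, _, rfl, rfl⟩
  exact mem_doubleCoset.2 ⟨u, hu, v, hv, (mul_assoc u z v).symm⟩

theorem two_mul_orderOf_le_ncard_doubleCoset [Finite G] (h : z * x * z⁻¹ ∉ zpowers x) :
    2 * orderOf x ≤ (doubleCoset z (zpowers x) (zpowers x)).ncard := by
  have hdisj : Disjoint ((zpowers x : Set G) * {z}) ((zpowers x : Set G) * {z * x}) := by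
    rw [Set.mul_singleton, Set.mul_singleton, Set.disjoint_left]
    rintro _ ⟨u, hu, rfl⟩ ⟨v, hv, he : v * (z * x) = u * z⟩
    have : z * x * z⁻¹ = v⁻¹ * u := by
      rw [eq_inv_mul_iff_mul_eq, ← mul_inv_eq_iff_eq_mul.2 he]
      group
    exact h (this ▸ mul_mem (inv_mem hv) hu)
  have hsub : (zpowers x : Set G) * {z} ∪ (zpowers x : Set G) * {z * x} ⊆
      doubleCoset z (zpowers x) (zpowers x) := by
    refine Set.union_subset ?_ (zpowers_mul_singleton_subset_doubleCoset (mem_zpowers x))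
    simpa using zpowers_mul_singleton_subset_doubleCoset (z := z) (one_mem (zpowers x))
  calc 2 * orderOf x
      = ((zpowers x : Set G) * {z} ∪ (zpowers x : Set G) * {z * x}).ncard := by
        rw [Set.ncard_union_eq hdisj, ncard_zpowers_mul_singleton, ncard_zpowers_mul_singleton,
          two_mul]
    _ ≤ _ := Set.ncard_le_ncard hsub

theorem eq_one_or_eq_of_mem_zpowers_of_orderOf_eq_two {u : G} (hx : orderOf x = 2)
    (hu : u ∈ zpowers x) :
    u = 1 ∨ u = x := by
  obtain ⟨k, rfl⟩ := hu
  change x ^ k = 1 ∨ x ^ k = x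
  rw [← zpow_mod_orderOf, hx]
  rcases Int.emod_two_eq_zero_or_one k with hk | hk <;> simp [hk]

/-- If `z⁻¹ ∈ ⟨x⟩z⟨x⟩` with `x` an involution, then either `x` normalizes `⟨z⟩` or `z` is also an
involution and `x` inverts `xz`; in both cases `⟨x, z⟩` is solvable. -/
theorem inv_notMem_doubleCoset_of_orderOf_eq_two [Finite G] (hx : orderOf x = 2)
    (hz : ¬ Group.IsSolvable (closure ({x, z} : Set G))) :
    z⁻¹ ∉ doubleCoset z (zpowers x) (zpowers x) := by
  have hxx : x⁻¹ = x := inv_eq_of_mul_eq_one_right (by rw [← sq, ← hx, pow_orderOf_eq_one])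
  intro hmem
  obtain ⟨u, hu, v, hv, he⟩ := mem_doubleCoset.1 hmem
  apply hz
  rcases eq_one_or_eq_of_mem_zpowers_of_orderOf_eq_two hx hu with hu | hu <;> subst u <;>
    rcases eq_one_or_eq_of_mem_zpowers_of_orderOf_eq_two hx hv with hv | hv <;> subst v
  · have hcl : closure ({x * z, x} : Set G) = closure ({x, z} : Set G) := by
      rw [Set.pair_comm]
      exact closure_pair_eq_of_mem_doubleCoset
        (mem_doubleCoset.2 ⟨x, mem_zpowers x, 1, one_mem _, by group⟩)
    rw [← hcl]
    refine isSolvable_closure_pair_of_conj_mem_zpowers ?_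
    have : x * (x * z) * x⁻¹ = (x * z)⁻¹ := by
      nth_rw 1 [← hxx]
      rw [mul_inv_rev, he]
      group
    rw [this]
    exact inv_mem (mem_zpowers _)
  all_goals rw [Set.pair_comm]; refine isSolvable_closure_pair_of_conj_mem_zpowers ?_
  · have : x * z * x⁻¹ = z := by rw [show x = z⁻¹ * z⁻¹ by nth_rw 2 [he]; group]; group
    rw [this]
    exact mem_zpowers z
  · have : x * z * x⁻¹ = z := by rw [show x = z⁻¹ * z⁻¹ by nth_rw 1 [he]; group]; group
    rw [this]
    exact mem_zpowers z
  · rw [hxx, ← he]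
    exact inv_mem (mem_zpowers z)

theorem conj_notMem_zpowers_of_not_isSolvable [Finite G]
    (hz : ¬ Group.IsSolvable (closure ({x, z} : Set G))) : z * x * z⁻¹ ∉ zpowers x :=
  fun h => hz (isSolvable_closure_pair_of_conj_mem_zpowers h)

theorem six_le_ncard_doubleCoset_union_inv [Finite G]
    (hz : ¬ Group.IsSolvable (closure ({x, z} : Set G))) :
    6 ≤ (doubleCoset z (zpowers x) (zpowers x) ∪
      doubleCoset z⁻¹ (zpowers x) (zpowers x)).ncard := by
  have hzx := conj_notMem_zpowers_of_not_isSolvable hz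
  have hx1 : orderOf x ≠ 1 := by
    rw [Ne, orderOf_eq_one_iff]
    rintro rfl
    simp at hzx
  have hD := two_mul_orderOf_le_ncard_doubleCoset hzx
  rcases eq_or_ne (orderOf x) 2 with hx2 | hx2
  · have hdisj : Disjoint (doubleCoset z (zpowers x) (zpowers x))
        (doubleCoset z⁻¹ (zpowers x) (zpowers x)) := by
      by_contra h
      exact inv_notMem_doubleCoset_of_orderOf_eq_two hx2 hz (mem_doubleCoset_of_not_disjoint h)
    have hD' : orderOf x ≤ (doubleCoset z⁻¹ (zpowers x) (zpowers x)).ncard := by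
      rw [← ncard_zpowers_mul_singleton x z⁻¹]
      refine Set.ncard_le_ncard ?_
      simpa using zpowers_mul_singleton_subset_doubleCoset (z := z⁻¹) (one_mem (zpowers x))
    rw [Set.ncard_union_eq hdisj]
    omega
  · have := orderOf_pos x
    calc 6 ≤ 2 * orderOf x := by omega
      _ ≤ _ := hD
      _ ≤ _ := Set.ncard_le_ncard Set.subset_union_left

end

theorem five_lt_degree_general (G : Type*) [Group G] [Finite G]
    (x : G)
    (hx : ¬ (∀ z : G, IsSolvable ↥(Subgroup.closure ({x, z} : Set G)))) :
    5 < Nat.card {y : G | ¬ IsSolvable ↥(Subgroup.closure ({x, y} : Set G))} := by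
  obtain ⟨z, hz⟩ := not_forall.1 hx
  have hsub : doubleCoset z (zpowers x) (zpowers x) ∪ doubleCoset z⁻¹ (zpowers x) (zpowers x) ⊆
      {y : G | ¬ Group.IsSolvable (closure ({x, y} : Set G))} := by
    rintro y (hy | hy) <;> rw [Set.mem_ofPred_eq, closure_pair_eq_of_mem_doubleCoset hy]
    · exact hz
    · rwa [closure_pair_inv]
  rw [Nat.card_coe_set_eq]
  calc 5 < 6 := by norm_num
    _ ≤ _ := six_le_ncard_doubleCoset_union_inv hz
    _ ≤ _ := Set.ncard_le_ncard hsub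

/-- Let `G` be a finite non-solvable group. Then every `x ∉ Sol(G)` satisfies
`deg(x) > 5`, i.e. the minimum degree of the induced non-solvable graph on
`G \ Sol(G)` is greater than `5`. -/
theorem five_lt_degree (G : Type*) [Group G] [Finite G]
    (hG : ¬ IsSolvable G) (x : G)
    (hx : ¬ (∀ z : G, IsSolvable ↥(Subgroup.closure ({x, z} : Set G)))) :
    5 < Nat.card {y : G | ¬ IsSolvable ↥(Subgroup.closure ({x, y} : Set G))} :=
  five_lt_degree_general G x hx
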